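/- arXiv:1908.10983 — 8 statements merged into one kernel-verified Lean document; each statement's English description precedes it below -/
import Mathlib

section
/- Let K > 0, z > 0, ω_n > 0, ξ = 1, and consider the critically damped step response p_u(t) = (Kz/ω_n²)·{1 − e^{−ω_n t}[1 + (ω_n − ω_n²/z)t]} for t ≥ 0. Then p_u is monotonically nondecreasing on [0,∞) (i.e., has no overshoot/Nadir) if and only if ω_n ≤ z. -/
lemma sq_div_four_le_exp {x : ℝ} (hx : 0 ≤ x) : x ^ 2 / 4 ≤ Real.exp x := by
  have h1 : x / 2 + 1 ≤ Real.exp (x / 2) := Real.add_one_le_exp _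
  have h2 : Real.exp (x / 2) * Real.exp (x / 2) = Real.exp x := by
    rw [← Real.exp_add]; ring_nf
  nlinarith [Real.exp_pos (x / 2)]

set_option maxHeartbeats 1000000 in
theorem stmt2 (K z ωn : ℝ) (hK : 0 < K) (hz : 0 < z) (hω : 0 < ωn) :
    MonotoneOn
      (fun t : ℝ => (K * z / ωn ^ 2) * (1 - Real.exp (-ωn * t) * (1 + (ωn - ωn ^ 2 / z) * t)))
      (Set.Ici 0) ↔ ωn ≤ z := by
  set C := K * z / ωn ^ 2 with hC
  set a := ωn - ωn ^ 2 / z with ha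
  clear_value C a
  have hCpos : 0 < C := by rw [hC]; positivity
  have hd : ∀ x : ℝ, HasDerivAt
      (fun t : ℝ => C * (1 - Real.exp (-ωn * t) * (1 + a * t)))
      (C * (-(Real.exp (-ωn * x) * (-ωn) * (1 + a * x) + Real.exp (-ωn * x) * a))) x := by
    intro x
    have h1 : HasDerivAt (fun t : ℝ => -ωn * t) (-ωn) x := by
      simpa using (hasDerivAt_id x).const_mul (-ωn)
    have h2 : HasDerivAt (fun t : ℝ => Real.exp (-ωn * t)) (Real.exp (-ωn * x) * (-ωn)) x :=
      h1.exp
    have h3 : HasDerivAt (fun t : ℝ => 1 + a * t) a x := by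
      simpa using ((hasDerivAt_id x).const_mul a).const_add 1
    exact ((h2.mul h3).const_sub 1).const_mul C
  constructor
  · intro hM
    by_contra hzo
    push_neg at hzo
    have haneg : a < 0 := by
      rw [ha]
      have h : ωn < ωn ^ 2 / z := by
        rw [lt_div_iff₀ hz]; nlinarith
      linarith
    have hna : 0 < -a := by linarith
    set t1 : ℝ := -2 / a with ht1
    clear_value t1
    have ht1pos : 0 < t1 := by
      rw [ht1]; exact div_pos_of_neg_of_neg (by norm_num) haneg
    have hat1 : a * t1 = -2 := by
      rw [ht1, mul_comm]; exact div_mul_cancel₀ _ haneg.ne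
    set c : ℝ := Real.exp (-ωn * t1) with hc
    clear_value c
    have hcpos : 0 < c := by rw [hc]; exact Real.exp_pos _
    set t2 : ℝ := t1 + 4 * (-a) / (ωn ^ 2 * c) with ht2
    clear_value t2
    have hDpos : 0 < 4 * (-a) / (ωn ^ 2 * c) := by positivity
    have ht2gt : t1 < t2 := by rw [ht2]; linarith
    have ht2pos : 0 < t2 := lt_trans ht1pos ht2gt
    -- from monotonicity
    have hle := hM (Set.mem_Ici.mpr ht1pos.le) (Set.mem_Ici.mpr ht2pos.le) ht2gt.le
    simp only at hle
    have hg : Real.exp (-ωn * t2) * (1 + a * t2) ≤ Real.exp (-ωn * t1) * (1 + a * t1) := by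
      nlinarith
    have hg1 : Real.exp (-ωn * t1) * (1 + a * t1) = -c := by
      rw [hat1, ← hc]; ring
    rw [hg1] at hg
    -- bound on exp at t2
    set u : ℝ := Real.exp (-ωn * t2) with hu
    clear_value u
    have hupos : 0 < u := by rw [hu]; exact Real.exp_pos _
    have huE : u * Real.exp (ωn * t2) = 1 := by
      rw [hu, ← Real.exp_add]; ring_nf; exact Real.exp_zero
    have hE : (ωn * t2) ^ 2 / 4 ≤ Real.exp (ωn * t2) :=
      sq_div_four_le_exp (by positivity)
    have hub : u * (ωn ^ 2 * t2 ^ 2) ≤ 4 := by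
      have h4 := mul_le_mul_of_nonneg_left hE hupos.le
      nlinarith [h4, huE]
    -- t2 large enough: ωn^2 * c * t2 > 4 * (-a)
    have hlarge : 4 * (-a) < ωn ^ 2 * c * t2 := by
      have h1 : ωn ^ 2 * c * (4 * (-a) / (ωn ^ 2 * c)) = 4 * (-a) := by
        field_simp
      rw [ht2]
      nlinarith [h1, mul_pos (mul_pos (pow_pos hω 2) hcpos) ht1pos]
    have hA : 4 * (-a) * (u * t2) < ωn ^ 2 * c * t2 * (u * t2) :=
      mul_lt_mul_of_pos_right hlarge (mul_pos hupos ht2pos)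
    have hB : c * (u * (ωn ^ 2 * t2 ^ 2)) ≤ c * 4 :=
      mul_le_mul_of_nonneg_left hub hcpos.le
    have hkey : u * (-a) * t2 < c := by nlinarith [hA, hB]
    have hg2 : -c < u * (1 + a * t2) := by nlinarith [hkey, hupos]
    linarith
  · intro hza
    have hanon : 0 ≤ a := by
      rw [ha]
      have h : ωn ^ 2 / z ≤ ωn := by
        rw [div_le_iff₀ hz]; nlinarith
      linarith
    apply monotoneOn_of_deriv_nonneg (convex_Ici 0)
    · exact Continuous.continuousOn (by fun_prop)
    · intro x hx
      exact (hd x).differentiableAt.differentiableWithinAt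
    · intro x hx
      rw [interior_Ici] at hx
      have hx' : 0 < x := hx
      rw [(hd x).deriv]
      have hexp : 0 < Real.exp (-ωn * x) := Real.exp_pos _
      have h1 : 0 ≤ ωn - a := by
        rw [ha]; have : 0 < ωn ^ 2 / z := by positivity
        linarith
      nlinarith [mul_nonneg (mul_nonneg hanon hω.le) hx'.le,
        mul_pos hCpos hexp,
        mul_nonneg (mul_pos hCpos hexp).le (mul_nonneg (mul_nonneg hanon hω.le) hx'.le),
        mul_nonneg (mul_pos hCpos hexp).le h1]
end

section
/- Let σ₁ = ω_n(ξ + √(ξ²−1)) and σ₂ = ω_n(ξ − √(ξ²−1)) with ξ > 1, ω_n > 0, z > 0, and η_{1,2} = 1/2 ∓ (ξ − ω_n/z)/(2√(ξ²−1)). Then the function ṗ_u(t) = (Kz/ω_n²)(σ₁η₁ e^{−σ₁ t} + σ₂η₂ e^{−σ₂ t}), K > 0, has a zero at some finite t ≥ 0 if and only if 1 − (ω_n/z)(ξ − √(ξ²−1)) < 0. -/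
/-!
Write the response as `A e^{-σ₁ t} + B e^{-σ₂ t}` with `σ₂ < σ₁`. Its value at `t = 0` is
`A + B = ω_n² / z > 0`. If `B ≥ 0` it stays positive for `t ≥ 0`, since `e^{-σ₁ t} ≤ e^{-σ₂ t}`;
if `B < 0` then `A > 0` and the zero is `t = log (A / -B) / (σ₁ - σ₂) ≥ 0`. Finally, because
`(ξ + √(ξ²-1))(ξ - √(ξ²-1)) = 1`, the slow coefficient is
`B = ω_n / (2√(ξ²-1)) · (1 - (ω_n / z)(ξ - √(ξ²-1)))`, whose sign is that of the stated condition.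
-/

open Real

theorem exists_nonneg_mul_exp_add_mul_exp_eq_zero_iff {A B σ₁ σ₂ : ℝ} (hσ : σ₂ < σ₁)
    (hAB : 0 < A + B) :
    (∃ t, 0 ≤ t ∧ A * exp (-σ₁ * t) + B * exp (-σ₂ * t) = 0) ↔ B < 0 := by
  constructor
  · rintro ⟨t, ht, hzero⟩
    by_contra! hB
    have hdecay : exp (-σ₁ * t) ≤ exp (-σ₂ * t) := exp_le_exp.mpr (by nlinarith)
    nlinarith [mul_le_mul_of_nonneg_left hdecay hB, mul_pos hAB (exp_pos (-σ₁ * t))]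
  · intro hB
    have hA : 0 < A := by linarith
    have hratio : 0 < -B / A := div_pos (neg_pos.mpr hB) hA
    refine ⟨-log (-B / A) / (σ₁ - σ₂), div_nonneg ?_ (sub_pos.mpr hσ).le, ?_⟩
    · rw [neg_nonneg]
      exact log_nonpos hratio.le ((div_le_one hA).mpr (by linarith))
    · have hfast : exp (-σ₁ * (-log (-B / A) / (σ₁ - σ₂)))
          = exp (-σ₂ * (-log (-B / A) / (σ₁ - σ₂))) * (-B / A) := by
        rw [← exp_log hratio, ← exp_add, exp_log hratio]
        congr 1
        field_simp [(sub_pos.mpr hσ).ne']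
        ring
      rw [hfast]
      field_simp
      ring

section OverdampedCoefficients

variable {ωn ξ s w : ℝ}

theorem overdamped_coeff_sum (hs : s ≠ 0) :
    ωn * (ξ + s) * (1 / 2 - (ξ - w) / (2 * s)) + ωn * (ξ - s) * (1 / 2 + (ξ - w) / (2 * s))
      = ωn * w := by
  field_simp
  ring

theorem overdamped_slow_coeff (hs : s ≠ 0) (hξs : s ^ 2 = ξ ^ 2 - 1) :
    ωn * (ξ - s) * (1 / 2 + (ξ - w) / (2 * s)) = ωn / (2 * s) * (1 - w * (ξ - s)) := by
  field_simp
  linear_combination -ωn * hξs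

end OverdampedCoefficients

theorem stmt3 (K z ωn ξ : ℝ) (hK : 0 < K) (hz : 0 < z) (hω : 0 < ωn) (hξ : 1 < ξ) :
    (∃ t : ℝ, 0 ≤ t ∧
      (K * z / ωn ^ 2) *
        ((ωn * (ξ + Real.sqrt (ξ ^ 2 - 1))) *
            (1 / 2 - (ξ - ωn / z) / (2 * Real.sqrt (ξ ^ 2 - 1))) *
              Real.exp (-(ωn * (ξ + Real.sqrt (ξ ^ 2 - 1))) * t) +
          (ωn * (ξ - Real.sqrt (ξ ^ 2 - 1))) *
            (1 / 2 + (ξ - ωn / z) / (2 * Real.sqrt (ξ ^ 2 - 1))) *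
              Real.exp (-(ωn * (ξ - Real.sqrt (ξ ^ 2 - 1))) * t)) = 0) ↔
    1 - (ωn / z) * (ξ - Real.sqrt (ξ ^ 2 - 1)) < 0 := by
  set s := √(ξ ^ 2 - 1)
  have hs : 0 < s := sqrt_pos.mpr (by nlinarith)
  have hs2 : s ^ 2 = ξ ^ 2 - 1 := sq_sqrt (by nlinarith)
  have hgain : K * z / ωn ^ 2 ≠ 0 := by positivity
  simp_rw [mul_eq_zero_iff_left hgain]
  rw [exists_nonneg_mul_exp_add_mul_exp_eq_zero_iff (by nlinarith),
    overdamped_slow_coeff hs.ne' hs2, ← smul_eq_mul, smul_neg_iff_of_pos_left (by positivity)]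
  rw [overdamped_coeff_sum hs.ne']
  positivity
end

section
/- Let ĥ(s) = (b₃s³ + b₂s² + b₁s + b₀)/(s⁴ + a₃s³ + a₂s² + a₁s + a₀) be a stable transfer function (all poles in the open left half plane). Let X be the solution of the Lyapunov equation AX + XAᵀ = −BBᵀ for the observable canonical realization with A = [[0,0,0,−a₀],[1,0,0,−a₁],[0,1,0,−a₂],[0,0,1,−a₃]], B = (b₀,b₁,b₂,b₃)ᵀ, C = (0,0,0,1). Then the (4,4) entry of X equals [ζ₀b₀² + ζ₁b₁² + ζ₂b₂² + ζ₃b₃² + ζ₄] / [2a₀(a₁a₂a₃ − a₁² − a₀a₃²)], where ζ₀ = a₂a₃ − a₁, ζ₁ = a₀a₃, ζ₂ = a₀a₁, ζ₃ = a₀a₁a₂ − a₀²a₃, ζ₄ = −2a₀(a₁b₁b₃ + a₃b₀b₂). -/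
open Matrix

theorem stmt5 (a₀ a₁ a₂ a₃ b₀ b₁ b₂ b₃ : ℝ)
    (hstab : ∀ s : ℂ,
      s ^ 4 + (a₃ : ℂ) * s ^ 3 + (a₂ : ℂ) * s ^ 2 + (a₁ : ℂ) * s + (a₀ : ℂ) = 0 → s.re < 0)
    (A : Matrix (Fin 4) (Fin 4) ℝ)
    (hA : A = !![0, 0, 0, -a₀; 1, 0, 0, -a₁; 0, 1, 0, -a₂; 0, 0, 1, -a₃])
    (B : Fin 4 → ℝ) (hB : B = ![b₀, b₁, b₂, b₃])
    (X : Matrix (Fin 4) (Fin 4) ℝ)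
    (hX : A * X + X * Aᵀ = -(vecMulVec B B)) :
    X 3 3 = ((a₂ * a₃ - a₁) * b₀ ^ 2 + (a₀ * a₃) * b₁ ^ 2 + (a₀ * a₁) * b₂ ^ 2 +
        (a₀ * a₁ * a₂ - a₀ ^ 2 * a₃) * b₃ ^ 2 - 2 * a₀ * (a₁ * b₁ * b₃ + a₃ * b₀ * b₂)) /
      (2 * a₀ * (a₁ * a₂ * a₃ - a₁ ^ 2 - a₀ * a₃ ^ 2)) := by
  -- a₀ ≠ 0
  have ha₀ : a₀ ≠ 0 := by
    intro h
    have := hstab 0 (by simp [h])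
    simp at this
  -- Δ ≠ 0
  have hΔ : a₁ * a₂ * a₃ - a₁ ^ 2 - a₀ * a₃ ^ 2 ≠ 0 := by
    intro hd
    by_cases ha₃ : a₃ = 0
    · have ha₁ : a₁ = 0 := by
        have : a₁ ^ 2 = 0 := by rw [ha₃] at hd; nlinarith
        exact pow_eq_zero_iff (n := 2) (by norm_num) |>.mp this
      obtain ⟨d, hdsq⟩ := IsAlgClosed.exists_pow_nat_eq ((a₂ : ℂ) ^ 2 - 4 * a₀) (n := 2) (by norm_num)
      obtain ⟨z, hz⟩ := IsAlgClosed.exists_pow_nat_eq ((-(a₂ : ℂ) + d) / 2) (n := 2) (by norm_num)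
      have hroot : ∀ w : ℂ, w ^ 2 = z ^ 2 →
          w ^ 4 + (a₃ : ℂ) * w ^ 3 + (a₂ : ℂ) * w ^ 2 + (a₁ : ℂ) * w + (a₀ : ℂ) = 0 := by
        intro w hw
        rw [hz] at hw
        push_cast [ha₃, ha₁]
        linear_combination (w ^ 2 + (-(a₂ : ℂ) + d) / 2 + a₂) * hw + (1/4 : ℂ) * hdsq
      have h1 := hstab z (hroot z rfl)
      have h2 := hstab (-z) (hroot (-z) (by ring))
      simp at h2
      linarith
    · obtain ⟨z, hz⟩ := IsAlgClosed.exists_pow_nat_eq (-((a₁ : ℂ) / a₃)) (n := 2) (by norm_num)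
      have ha₃c : (a₃ : ℂ) ≠ 0 := by exact_mod_cast ha₃
      have hdc : (a₁ : ℂ) * a₂ * a₃ - a₁ ^ 2 - a₀ * a₃ ^ 2 = 0 := by exact_mod_cast hd
      have hz' : (a₃ : ℂ) * z ^ 2 = -a₁ := by rw [hz]; field_simp
      have hroot : ∀ w : ℂ, w ^ 2 = z ^ 2 →
          w ^ 4 + (a₃ : ℂ) * w ^ 3 + (a₂ : ℂ) * w ^ 2 + (a₁ : ℂ) * w + (a₀ : ℂ) = 0 := by
        intro w hw
        have hw' : (a₃ : ℂ) * w ^ 2 = -a₁ := by rw [hw]; exact hz'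
        have key : (a₃ : ℂ) ^ 2 * (w ^ 4 + a₃ * w ^ 3 + a₂ * w ^ 2 + a₁ * w + a₀) = 0 := by
          linear_combination (a₃ * w ^ 2 + a₃ ^ 2 * w + a₂ * a₃ - a₁) * hw' - hdc
        have := mul_eq_zero.mp key
        rcases this with h | h
        · exact absurd (pow_eq_zero_iff (n := 2) (by norm_num) |>.mp h) ha₃c
        · exact h
      have h1 := hstab z (hroot z rfl)
      have h2 := hstab (-z) (hroot (-z) (by ring))
      simp at h2
      linarith
  -- extract scalar equations
  have hAT : Aᵀ = !![0, 1, 0, 0; 0, 0, 1, 0; 0, 0, 0, 1; -a₀, -a₁, -a₂, -a₃] := by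
    subst hA; ext i j; fin_cases i <;> fin_cases j <;> rfl
  rw [hAT] at hX
  have e := fun i j => congrFun (congrFun hX i) j
  have e00 := e 0 0; have e02 := e 0 2; have e20 := e 2 0
  have e11 := e 1 1; have e13 := e 1 3; have e31 := e 3 1
  have e22 := e 2 2; have e33 := e 3 3
  simp only [hA, hB, Matrix.add_apply, Matrix.mul_apply, Fin.sum_univ_four,
    Matrix.neg_apply, Matrix.vecMulVec_apply, Matrix.cons_val', Matrix.cons_val_zero,
    Matrix.cons_val_one, Matrix.head_cons, Matrix.empty_val', Matrix.cons_val_fin_one,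
    Matrix.head_fin_const, Matrix.cons_val_two, Matrix.tail_cons, Matrix.cons_val_three,
    Matrix.head_fin_const, Matrix.of_apply, Matrix.cons_val_succ] at e00 e02 e20 e11 e13 e31 e22 e33
  have hne : 2 * a₀ * (a₁ * a₂ * a₃ - a₁ ^ 2 - a₀ * a₃ ^ 2) ≠ 0 := by
    intro h
    rcases mul_eq_zero.mp h with h | h
    · rcases mul_eq_zero.mp h with h | h
      · norm_num at h
      · exact ha₀ h
    · exact hΔ h
  rw [eq_div_iff hne]
  linear_combination a₀ * a₁ * (e13 + e31) - a₀ * a₁ * e22 + a₀ * a₃ * (e02 + e20 - e11) -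
    a₀ * (a₁ * a₂ - a₀ * a₃) * e33 + (a₁ - a₂ * a₃) * e00
end

section
/- Fix m > 0, τ > 0, ď > 0, r_t > 0, λ > 0 and define ρ(m_v) = [m + m_v + τ(λτ + ď)] / [2λ(τ ď(λτ + ď + r_t^{-1}) + (m + m_v)(ď + r_t^{-1}))] for m_v ≥ 0. Then ρ is strictly decreasing in m_v, and for all m_v > 0: 1/(2λ(ď + r_t^{-1})) < ρ(m_v) < ρ(0), where the lower bound is lim_{m_v→∞} ρ(m_v). -/
/-!
The squared norm is a linear fractional function of the virtual inertia,
`ρ(x) = (x + a) / (c x + b)` with `c = 2λ(ď + r_t⁻¹)`, and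
`c a - b = 2 λ² τ² r_t⁻¹ > 0`. Writing `ρ(x) = 1/c + (c a - b) / (c (c x + b))`
shows that `ρ` decreases strictly towards its horizontal asymptote `1/c`.
-/

open Filter Topology

section LinearFractional

variable {a b c : ℝ}

theorem strictAntiOn_linearFractional (hab : b < c * a) :
    StrictAntiOn (fun x => (x + a) / (c * x + b)) {x | 0 < c * x + b} := by
  intro x hx y hy hxy
  show (y + a) / (c * y + b) < (x + a) / (c * x + b)
  rw [div_lt_div_iff₀ hy hx]
  nlinarith [mul_lt_mul_of_pos_left hab (sub_pos.2 hxy)]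

theorem one_div_lt_linearFractional (hc : 0 < c) (hab : b < c * a) {x : ℝ}
    (hx : 0 < c * x + b) : 1 / c < (x + a) / (c * x + b) := by
  rw [div_lt_div_iff₀ hc hx]
  linarith

theorem tendsto_linearFractional_atTop (hc : 0 < c) :
    Tendsto (fun x => (x + a) / (c * x + b)) atTop (𝓝 (1 / c)) := by
  have hlim : Tendsto (fun x : ℝ => (a / x + 1) / (b / x + c)) atTop (𝓝 ((0 + 1) / (0 + c))) :=
    ((tendsto_const_nhds.div_atTop tendsto_id).add tendsto_const_nhds).div
      ((tendsto_const_nhds.div_atTop tendsto_id).add tendsto_const_nhds) (by simpa using hc.ne')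
  rw [zero_add, zero_add] at hlim
  refine hlim.congr' ?_
  filter_upwards [eventually_gt_atTop 0] with x hx
  field_simp
  ring

end LinearFractional

theorem stmt8 (m τ dch rt lam : ℝ) (hm : 0 < m) (hτ : 0 < τ) (hd : 0 < dch)
    (hrt : 0 < rt) (hlam : 0 < lam) :
    let ρ : ℝ → ℝ := fun mv =>
      (m + mv + τ * (lam * τ + dch)) /
        (2 * lam * (τ * dch * (lam * τ + dch + rt⁻¹) + (m + mv) * (dch + rt⁻¹)))
    StrictAntiOn ρ (Set.Ici 0) ∧
      (∀ mv > 0, 1 / (2 * lam * (dch + rt⁻¹)) < ρ mv ∧ ρ mv < ρ 0) ∧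
      Filter.Tendsto ρ Filter.atTop (nhds (1 / (2 * lam * (dch + rt⁻¹)))) := by
  intro ρ
  set a := m + τ * (lam * τ + dch)
  set b := 2 * lam * (τ * dch * (lam * τ + dch + rt⁻¹) + m * (dch + rt⁻¹))
  set c := 2 * lam * (dch + rt⁻¹)
  have hρ : ρ = fun x => (x + a) / (c * x + b) := by
    funext x
    simp only [ρ, a, b, c]
    congr 1 <;> ring
  have hc : 0 < c := by positivity
  have hb : 0 < b := by positivity
  have hab : b < c * a := by
    have hgap : c * a - b = 2 * lam ^ 2 * τ ^ 2 * rt⁻¹ := by simp only [a, b, c]; ring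
    linarith [show 0 < 2 * lam ^ 2 * τ ^ 2 * rt⁻¹ by positivity]
  have hdom : Set.Ici (0 : ℝ) ⊆ {x | 0 < c * x + b} := fun x (hx : 0 ≤ x) => by
    show 0 < c * x + b
    positivity
  have hanti : StrictAntiOn ρ (Set.Ici 0) := hρ ▸ (strictAntiOn_linearFractional hab).mono hdom
  refine ⟨hanti, fun mv hmv => ⟨?_, hanti Set.self_mem_Ici hmv.le hmv⟩,
    hρ ▸ tendsto_linearFractional_atTop hc⟩
  rw [hρ]
  exact one_div_lt_linearFractional hc hab (hdom hmv.le)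
end

section
/- Fix m > 0, τ > 0, d ≥ 0, r_t > 0, λ > 0, m_v ≥ 0 and define ρ(r) = [m + m_v + τ(λτ + d + r)] / [2λ(τ(d+r)(λτ + d + r + r_t^{-1}) + (m+m_v)(d + r + r_t^{-1}))] as a function of r ≥ 0. Then ρ is strictly decreasing in r; in particular the open-loop value ρ(0) exceeds ρ(r) for all r > 0. -/
theorem stmt9 (m τ d rt lam mv : ℝ) (hm : 0 < m) (hτ : 0 < τ) (hd : 0 ≤ d)
    (hrt : 0 < rt) (hlam : 0 < lam) (hmv : 0 ≤ mv) :
    let ρ : ℝ → ℝ := fun r =>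
      (m + mv + τ * (lam * τ + d + r)) /
        (2 * lam * (τ * (d + r) * (lam * τ + d + r + rt⁻¹) + (m + mv) * (d + r + rt⁻¹)))
    StrictAntiOn ρ (Set.Ici 0) ∧ ∀ r > 0, ρ r < ρ 0 := by
  intro ρ
  have hs : 0 < rt⁻¹ := inv_pos.mpr hrt
  have hM : 0 < m + mv := by linarith
  have hD : ∀ r : ℝ, 0 ≤ r →
      0 < 2 * lam * (τ * (d + r) * (lam * τ + d + r + rt⁻¹) + (m + mv) * (d + r + rt⁻¹)) := by
    intro r hr
    have h1 : 0 ≤ τ * (d + r) * (lam * τ + d + r + rt⁻¹) := by positivity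
    have h2 : 0 < (m + mv) * (d + r + rt⁻¹) := by positivity
    positivity
  have key : ∀ a ∈ Set.Ici (0:ℝ), ∀ b ∈ Set.Ici (0:ℝ), a < b → ρ b < ρ a := by
    intro a ha b hb hab
    simp only [Set.mem_Ici] at ha hb
    show (m + mv + τ * (lam * τ + d + b)) /
        (2 * lam * (τ * (d + b) * (lam * τ + d + b + rt⁻¹) + (m + mv) * (d + b + rt⁻¹))) <
      (m + mv + τ * (lam * τ + d + a)) /
        (2 * lam * (τ * (d + a) * (lam * τ + d + a + rt⁻¹) + (m + mv) * (d + a + rt⁻¹)))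
    have hAa : (0:ℝ) < m + mv + lam * τ * τ + τ * (d + a) := by
      nlinarith [mul_nonneg hτ.le (show (0:ℝ) ≤ d + a by linarith), mul_pos hlam (mul_pos hτ hτ)]
    have hAb : (0:ℝ) < m + mv + lam * τ * τ + τ * (d + b) := by
      nlinarith [mul_nonneg hτ.le (show (0:ℝ) ≤ d + b by linarith), mul_pos hlam (mul_pos hτ hτ)]
    rw [div_lt_div_iff₀ (hD b hb) (hD a ha)]
    nlinarith [mul_pos (mul_pos hlam hτ) hs,
      mul_pos (mul_pos (mul_pos hlam (mul_pos hτ (mul_pos hτ hτ))) hs) (sub_pos.mpr hab),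
      mul_pos hlam (mul_pos (mul_pos
        hAa
        hAb)
        (sub_pos.mpr hab)),
      sq_nonneg (a - b), mul_pos hτ hs]
  refine ⟨key, fun r hr => key 0 Set.self_mem_Ici r (Set.mem_Ici.mpr hr.le) hr⟩
end

section
/- Let m, τ, λ > 0 and for parameters δ > 0, ν > 0 define the third-order H₂-norm value Q(δ,ν) = (a₃b₁² + a₁b₂² + a₁a₂b₃² − 2a₁b₁b₃)/(2a₁(a₂a₃ − a₁)) evaluated in the limit δ → 0 with a₁ = λ/(mτ), b₁ = 1/(mτ), a₂ = (d + r_t^{-1} + λτ + ν)/(mτ), b₂ = 1/m, a₃ = (m + dτ + ντ)/(mτ), b₃ = 0. Then Q → 0 as ν → ∞. -/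
open Filter

lemma aux_rat_tendsto (A B C D E : ℝ) (hE : E ≠ 0) :
    Tendsto (fun ν : ℝ => (A + B * ν) / (C + D * ν + E * ν ^ 2)) atTop (nhds 0) := by
  have hpow : Tendsto (fun ν : ℝ => ν ^ 2) atTop atTop := tendsto_pow_atTop two_ne_zero
  have h1 : Tendsto (fun ν : ℝ => A / ν ^ 2 + B / ν) atTop (nhds 0) := by
    have hA := tendsto_const_nhds.div_atTop (l := atTop) hpow (f := fun _ => A)
    have hB := tendsto_const_nhds.div_atTop (l := atTop) tendsto_id (f := fun _ => B)
    simpa using hA.add hB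
  have h2 : Tendsto (fun ν : ℝ => C / ν ^ 2 + D / ν + E) atTop (nhds E) := by
    have hC := tendsto_const_nhds.div_atTop (l := atTop) hpow (f := fun _ => C)
    have hD := tendsto_const_nhds.div_atTop (l := atTop) tendsto_id (f := fun _ => D)
    simpa using (hC.add hD).add (tendsto_const_nhds (x := E))
  have h3 := h1.div h2 hE
  rw [zero_div] at h3
  refine h3.congr' ?_
  filter_upwards [eventually_ge_atTop (1 : ℝ)] with ν hν
  have hν0 : ν ≠ 0 := by linarith
  have hν2 : (ν : ℝ) ^ 2 ≠ 0 := pow_ne_zero _ hν0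
  have e1 : A / ν ^ 2 + B / ν = (A + B * ν) / ν ^ 2 := by field_simp
  have e2 : C / ν ^ 2 + D / ν + E = (C + D * ν + E * ν ^ 2) / ν ^ 2 := by field_simp
  simp only [Pi.div_apply]
  rw [e1, e2, div_div_div_cancel_right₀ hν2]

theorem stmt11 (m τ lam d rtinv : ℝ) (hm : 0 < m) (hτ : 0 < τ) (hlam : 0 < lam) :
    let a₁ : ℝ := lam / (m * τ)
    let b₁ : ℝ := 1 / (m * τ)
    let b₂ : ℝ := 1 / m
    let a₂ : ℝ → ℝ := fun ν => (d + rtinv + lam * τ + ν) / (m * τ)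
    let a₃ : ℝ → ℝ := fun ν => (m + d * τ + ν * τ) / (m * τ)
    let b₃ : ℝ := 0
    Filter.Tendsto
      (fun ν => (a₃ ν * b₁ ^ 2 + a₁ * b₂ ^ 2 + a₁ * a₂ ν * b₃ ^ 2 - 2 * a₁ * b₁ * b₃) /
        (2 * a₁ * (a₂ ν * a₃ ν - a₁)))
      Filter.atTop (nhds 0) := by
  intro a₁ b₁ b₂ a₂ a₃ b₃
  have hm0 : m ≠ 0 := hm.ne'
  have hτ0 : τ ≠ 0 := hτ.ne'
  set A : ℝ := (m + d * τ) / (m * τ) ^ 3 + lam / ((m * τ) * m ^ 2) with hA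
  set B : ℝ := 1 / (m ^ 3 * τ ^ 2) with hB
  set E : ℝ := 2 * lam / (m ^ 3 * τ ^ 2) with hE
  set C : ℝ := 2 * lam / (m * τ) *
      ((d + rtinv + lam * τ) * (m + d * τ) / (m * τ) ^ 2 - lam / (m * τ)) with hC
  set D : ℝ := 2 * lam / (m * τ) *
      (((d + rtinv + lam * τ) * τ + (m + d * τ)) / (m * τ) ^ 2) with hD
  have hEne : E ≠ 0 := by
    rw [hE]; positivity
  have key := aux_rat_tendsto A B C D E hEne
  refine key.congr (fun ν => ?_)
  have hnum : A + B * ν = a₃ ν * b₁ ^ 2 + a₁ * b₂ ^ 2 + a₁ * a₂ ν * b₃ ^ 2 - 2 * a₁ * b₁ * b₃ := by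
    simp only [a₁, b₁, b₂, a₂, a₃, b₃, hA, hB]
    field_simp
    ring
  have hden : C + D * ν + E * ν ^ 2 = 2 * a₁ * (a₂ ν * a₃ ν - a₁) := by
    simp only [a₁, a₂, a₃, hC, hD, hE]
    field_simp
    ring
  rw [hnum, hden]
end

section
/- Let m̌ > 0, τ > 0, r_t > 0, ď ≥ 0, and define ω_n = √((ď + r_t^{-1})/(m̌τ)), ξ = (τ^{-1} + ď/m̌)/(2ω_n). Then the conditions (ξ ≥ 1 and ξω_n ≤ τ^{-1}) hold if and only if ď ≤ m̌(τ^{-1} − 2√(r_t^{-1}/(m̌τ))). -/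
set_option maxHeartbeats 1000000 in
theorem stmt15 (mch τ rt dch : ℝ) (hm : 0 < mch) (hτ : 0 < τ) (hrt : 0 < rt) (hd : 0 ≤ dch) :
    let ωn := Real.sqrt ((dch + rt⁻¹) / (mch * τ))
    let ξ := (τ⁻¹ + dch / mch) / (2 * ωn)
    (1 ≤ ξ ∧ ξ * ωn ≤ τ⁻¹) ↔ dch ≤ mch * (τ⁻¹ - 2 * Real.sqrt (rt⁻¹ / (mch * τ))) := by
  intro ωn ξ
  have hmτ : 0 < mch * τ := mul_pos hm hτ
  have hrt' : 0 < rt⁻¹ := inv_pos.mpr hrt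
  have hτ' : 0 < τ⁻¹ := inv_pos.mpr hτ
  have hpos : 0 < (dch + rt⁻¹) / (mch * τ) := div_pos (by linarith) hmτ
  have hωn : 0 < ωn := Real.sqrt_pos.mpr hpos
  have hωn2 : ωn ^ 2 = (dch + rt⁻¹) / (mch * τ) := Real.sq_sqrt hpos.le
  set s := Real.sqrt (rt⁻¹ / (mch * τ)) with hs
  have hs0 : 0 ≤ s := Real.sqrt_nonneg _
  have hs2 : s ^ 2 = rt⁻¹ / (mch * τ) := Real.sq_sqrt (div_pos hrt' hmτ).le
  have hξ : ξ = (τ⁻¹ + dch / mch) / (2 * ωn) := rfl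
  have hA0 : 0 ≤ τ⁻¹ + dch / mch := by positivity
  clear_value ξ ωn s
  have hD : 0 ≤ dch / mch := div_nonneg hd hm.le
  have e1 : (dch + rt⁻¹) / (mch * τ) = (dch / mch) * τ⁻¹ + rt⁻¹ / (mch * τ) := by
    field_simp
  have hω4 : (2 * ωn) ^ 2 = 4 * ((dch / mch) * τ⁻¹ + rt⁻¹ / (mch * τ)) := by
    have : (2 * ωn) ^ 2 = 4 * ωn ^ 2 := by ring
    rw [this, hωn2, e1]
  have hxv : ξ * ωn = (τ⁻¹ + dch / mch) / 2 := by
    rw [hξ]; field_simp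
  constructor
  · rintro ⟨h1, h2⟩
    rw [hξ, le_div_iff₀ (by positivity)] at h1
    rw [hxv] at h2
    have h2' : dch / mch ≤ τ⁻¹ := by linarith
    have hsq : (2 * ωn) ^ 2 ≤ (τ⁻¹ + dch / mch) ^ 2 := by
      nlinarith [hωn.le, h1]
    have key : (2 * s) ^ 2 ≤ (τ⁻¹ - dch / mch) ^ 2 := by
      rw [hω4] at hsq
      nlinarith [hsq, hs2]
    have hle : 2 * s ≤ τ⁻¹ - dch / mch := by
      calc 2 * s = Real.sqrt ((2 * s) ^ 2) := (Real.sqrt_sq (by positivity)).symm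
        _ ≤ Real.sqrt ((τ⁻¹ - dch / mch) ^ 2) := Real.sqrt_le_sqrt key
        _ = τ⁻¹ - dch / mch := Real.sqrt_sq (by linarith)
    have hgoal : dch / mch ≤ τ⁻¹ - 2 * s := by linarith
    calc dch = mch * (dch / mch) := by field_simp
      _ ≤ mch * (τ⁻¹ - 2 * s) := mul_le_mul_of_nonneg_left hgoal hm.le
  · intro h
    have hdm : dch / mch ≤ τ⁻¹ - 2 * s := by
      rw [div_le_iff₀ hm]; linarith [h, mul_comm mch (τ⁻¹ - 2 * s)]
    have h2' : dch / mch ≤ τ⁻¹ := by linarith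
    have key : (2 * s) ^ 2 ≤ (τ⁻¹ - dch / mch) ^ 2 := by
      nlinarith [hs0, hdm]
    have hsq : (2 * ωn) ^ 2 ≤ (τ⁻¹ + dch / mch) ^ 2 := by
      rw [hω4]
      nlinarith [key, hs2]
    have h1' : 2 * ωn ≤ τ⁻¹ + dch / mch := by
      calc 2 * ωn = Real.sqrt ((2 * ωn) ^ 2) := (Real.sqrt_sq (by positivity)).symm
        _ ≤ Real.sqrt ((τ⁻¹ + dch / mch) ^ 2) := Real.sqrt_le_sqrt hsq
        _ = τ⁻¹ + dch / mch := Real.sqrt_sq hA0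
    refine ⟨?_, ?_⟩
    · rw [hξ, le_div_iff₀ (by positivity)]; linarith
    · rw [hxv]; linarith
end

section
/- For m > 0, τ > 0, d ≥ 0, r_r > 0, r_t > 0, let ď = d + r_r^{-1}, and consider the mode-0 closed-loop transfer function under iDroop with δ = τ^{-1} and ν = r_r^{-1} + r_t^{-1}: ĥ(s) = ĝ(s)/(1 − ĝ(s)ĉ(s)), where ĝ(s) = (τs+1)/(mτs² + (m+dτ)s + d + r_t^{-1}) and ĉ(s) = r_t^{-1}/(τs+1) − (r_r^{-1} + r_t^{-1}). Then ĥ(s) = 1/(ms + ď + r_t^{-1}), a first-order transfer function. -/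
/-- The term `k / a` of the controller exactly undoes the feedback `k` inside the plant. -/
theorem feedback_div_eq_inv {K : Type*} [Field K] {a p k : K} (ν : K) (ha : a ≠ 0)
    (hD : a * p + k ≠ 0) :
    a / (a * p + k) / (1 - a / (a * p + k) * (k / a - ν)) = (p + ν)⁻¹ := by
  have hloop : 1 - a / (a * p + k) * (k / a - ν) = a * (p + ν) / (a * p + k) := by
    field_simp
    ring
  rw [hloop, div_div_div_cancel_right₀ hD, div_mul_cancel_left₀ ha]

theorem stmt19_general (m τ d rr rt : ℝ) :
    let g : ℝ → ℝ := fun s => (τ * s + 1) / (m * τ * s ^ 2 + (m + d * τ) * s + d + rt⁻¹)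
    let c : ℝ → ℝ := fun s => rt⁻¹ / (τ * s + 1) - (rr⁻¹ + rt⁻¹)
    ∀ s : ℝ, m * τ * s ^ 2 + (m + d * τ) * s + d + rt⁻¹ ≠ 0 → τ * s + 1 ≠ 0 →
      m * s + (d + rr⁻¹) + rt⁻¹ ≠ 0 →
      g s / (1 - g s * c s) = 1 / (m * s + (d + rr⁻¹) + rt⁻¹) := by
  intro g c s hD hA _
  -- The plant denominator is the swing dynamics `m s + d` times the turbine lag, plus `rt⁻¹`.
  have hfactor : m * τ * s ^ 2 + (m + d * τ) * s + d + rt⁻¹ = (τ * s + 1) * (m * s + d) + rt⁻¹ := by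
    ring
  show (τ * s + 1) / _ / (1 - (τ * s + 1) / _ * (rt⁻¹ / (τ * s + 1) - (rr⁻¹ + rt⁻¹))) = _
  rw [hfactor] at hD ⊢
  rw [feedback_div_eq_inv _ hA hD, one_div]
  ring

theorem stmt19 (m τ d rr rt : ℝ) (hm : 0 < m) (hτ : 0 < τ) (hd : 0 ≤ d)
    (hrr : 0 < rr) (hrt : 0 < rt) :
    let g : ℝ → ℝ := fun s => (τ * s + 1) / (m * τ * s ^ 2 + (m + d * τ) * s + d + rt⁻¹)
    let c : ℝ → ℝ := fun s => rt⁻¹ / (τ * s + 1) - (rr⁻¹ + rt⁻¹)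
    ∀ s : ℝ, m * τ * s ^ 2 + (m + d * τ) * s + d + rt⁻¹ ≠ 0 → τ * s + 1 ≠ 0 →
      m * s + (d + rr⁻¹) + rt⁻¹ ≠ 0 →
      g s / (1 - g s * c s) = 1 / (m * s + (d + rr⁻¹) + rt⁻¹) :=
  stmt19_general m τ d rr rt
end
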